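/- Let θ > 3. The dispersion relation ω(k) := √(α̂(k)) is differentiable at every k ∈ (0, 1/2), with ω'(k) = α̂'(k)/(2√(α̂(k))) where α̂'(k) = 4π·Σ_{x=1}^∞ sin(2πkx)/x^{θ−1}, and lim_{k→0+} ω'(k) = √(C(θ)), where C(θ) := 4π²·Σ_{x=1}^∞ x^{2−θ}. -/

import Mathlib

noncomputable section
open Real

/-- `α̂(k) = 4 Σ_{x≥1} sin²(πkx)/x^θ`, the Fourier transform of the long-range coupling. -/
def ahat (θ k : ℝ) : ℝ := 4 * ∑' x : ℕ, sin (π * k * ((x : ℝ) + 1)) ^ 2 / ((x : ℝ) + 1) ^ θ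

/-- The dispersion relation `ω(k) = √(α̂(k))`. -/
def disp (θ k : ℝ) : ℝ := Real.sqrt (ahat θ k)

/-- `α̂'(k) = 4π Σ_{x≥1} sin(2πkx)/x^{θ-1}`. -/
def ahatD (θ k : ℝ) : ℝ := 4 * π * ∑' x : ℕ, sin (2 * π * k * ((x : ℝ) + 1)) / ((x : ℝ) + 1) ^ (θ - 1)

/-- `C(θ) = 4π² Σ_{x≥1} x^{2-θ}` for `θ > 3`. -/
def Cθ3 (θ : ℝ) : ℝ := 4 * π ^ 2 * ∑' x : ℕ, ((x : ℝ) + 1) ^ (2 - θ)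

/-!
For `θ > 2` the termwise derivatives `π sin(2πkx)/x^{θ-1}` of the series `α̂` are dominated by
`π x^{1-θ}`, so `α̂` may be differentiated termwise, and `ω' = α̂'/(2ω)` by the chain rule
wherever `α̂ > 0`. Near `k = 0`, `sin(ck)/k → c` with `|sin(ck)/k| ≤ |c|`, so for `θ > 3` dominated
convergence against `Σ x^{2-θ}` gives `α̂'(k)/k → 2C(θ)` and `α̂(k)/k² → C(θ)`. Hence
`ω'(k) = (α̂'(k)/k) / (2√(α̂(k)/k²)) → 2C(θ)/(2√C(θ)) = √C(θ)`.
-/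

open Filter Topology

lemma summable_nat_add_one_rpow {p : ℝ} (hp : p < -1) :
    Summable fun n : ℕ => ((n : ℝ) + 1) ^ p := by
  have h := (summable_nat_add_iff 1).mpr (Real.summable_nat_rpow.mpr hp)
  exact h.congr fun n => by push_cast; rfl

lemma hasDerivAt_sin_sq_div_rpow (θ : ℝ) {b : ℝ} (hb : 0 < b) (k : ℝ) :
    HasDerivAt (fun k => sin (π * k * b) ^ 2 / b ^ θ)
      (π * sin (2 * π * k * b) / b ^ (θ - 1)) k := by
  have hlin : HasDerivAt (fun k : ℝ => π * k * b) (π * b) k := by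
    simpa using ((hasDerivAt_id k).const_mul π).mul_const b
  refine ((hlin.sin.pow 2).div_const (b ^ θ)).congr_deriv ?_
  rw [Real.rpow_sub hb, Real.rpow_one, show 2 * π * k * b = 2 * (π * k * b) by ring,
    Real.sin_two_mul]
  have : b ^ θ ≠ 0 := (Real.rpow_pos_of_pos hb θ).ne'
  field_simp
  ring

lemma hasDerivAt_ahat {θ : ℝ} (hθ : 2 < θ) (k : ℝ) : HasDerivAt (ahat θ) (ahatD θ k) k := by
  have hb (n : ℕ) : (0 : ℝ) < n + 1 := by positivity
  have hsum := (summable_nat_add_one_rpow (show 1 - θ < -1 by linarith)).mul_left π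
  have hbound (n : ℕ) (y : ℝ) :
      ‖π * sin (2 * π * y * ((n : ℝ) + 1)) / ((n : ℝ) + 1) ^ (θ - 1)‖
        ≤ π * ((n : ℝ) + 1) ^ (1 - θ) := by
    rw [show 1 - θ = -(θ - 1) by ring, Real.rpow_neg (hb n).le, Real.norm_eq_abs, abs_div,
      abs_mul, abs_of_pos pi_pos, abs_of_pos (Real.rpow_pos_of_pos (hb n) _), div_eq_mul_inv]
    gcongr
    exact mul_le_of_le_one_right pi_pos.le (abs_sin_le_one _)
  have h := (hasDerivAt_tsum hsum (fun n => hasDerivAt_sin_sq_div_rpow θ (hb n)) hbound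
    (y₀ := 0) (by simp) k).const_mul 4
  have hD : ahatD θ k
      = 4 * ∑' n : ℕ, π * sin (2 * π * k * ((n : ℝ) + 1)) / ((n : ℝ) + 1) ^ (θ - 1) := by
    simp only [ahatD, mul_div_assoc, tsum_mul_left, mul_assoc]
  rwa [hD]

lemma ahat_nonneg (θ k : ℝ) : 0 ≤ ahat θ k :=
  mul_nonneg zero_le_four (tsum_nonneg fun n => by positivity)

lemma ahat_pos {θ k : ℝ} (hθ : 1 < θ) (hk0 : 0 < k) (hk1 : k < 1) : 0 < ahat θ k := by
  have hb (n : ℕ) : (0 : ℝ) < n + 1 := by positivity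
  have hsum : Summable fun n : ℕ => sin (π * k * ((n : ℝ) + 1)) ^ 2 / ((n : ℝ) + 1) ^ θ := by
    refine (summable_nat_add_one_rpow (show -θ < -1 by linarith)).of_nonneg_of_le
      (fun n => by positivity) fun n => ?_
    rw [Real.rpow_neg (hb n).le, ← one_div]
    gcongr
    exact sin_sq_le_one _
  have hsin : 0 < sin (π * k) := sin_pos_of_pos_of_lt_pi (by positivity) (by nlinarith [pi_pos])
  have h0 : 0 < sin (π * k * (((0 : ℕ) : ℝ) + 1)) ^ 2 / (((0 : ℕ) : ℝ) + 1) ^ θ := by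
    simpa using pow_pos hsin 2
  exact mul_pos four_pos (hsum.tsum_pos (fun n => by positivity) 0 h0)

lemma hasDerivAt_disp {θ k : ℝ} (hθ : 2 < θ) (hk0 : 0 < k) (hk1 : k < 1) :
    HasDerivAt (disp θ) (ahatD θ k / (2 * Real.sqrt (ahat θ k))) k := by
  have h := (Real.hasDerivAt_sqrt (ahat_pos (by linarith) hk0 hk1).ne').comp k
    (hasDerivAt_ahat hθ k)
  rwa [one_div_mul_eq_div] at h

lemma abs_sin_mul_div_le (c k : ℝ) : |sin (c * k) / k| ≤ |c| := by
  rcases eq_or_ne k 0 with rfl | hk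
  · simp
  rw [abs_div, div_le_iff₀ (abs_pos.2 hk), ← abs_mul]
  exact abs_sin_le_abs

lemma tendsto_sin_mul_div (c : ℝ) : Tendsto (fun k => sin (c * k) / k) (𝓝[≠] 0) (𝓝 c) := by
  have h : HasDerivAt (fun k => sin (c * k)) c 0 := by
    simpa using ((hasDerivAt_id (0 : ℝ)).const_mul c).sin
  simpa [slope_fun_def, div_eq_inv_mul] using hasDerivAt_iff_tendsto_slope.mp h

lemma tendsto_tsum_sin_mul_div_mul {c d : ℕ → ℝ} (h : Summable fun n => |c n| * |d n|) :
    Tendsto (fun k => ∑' n, sin (c n * k) / k * d n) (𝓝[≠] 0) (𝓝 (∑' n, c n * d n)) :=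
  tendsto_tsum_of_dominated_convergence h
    (fun n => (tendsto_sin_mul_div (c n)).mul_const (d n))
    (Eventually.of_forall fun k n => by
      rw [norm_mul, Real.norm_eq_abs, Real.norm_eq_abs]
      exact mul_le_mul_of_nonneg_right (abs_sin_mul_div_le _ _) (abs_nonneg _))

lemma tendsto_tsum_sq_sin_mul_div_mul {c d : ℕ → ℝ} (h : Summable fun n => c n ^ 2 * |d n|) :
    Tendsto (fun k => ∑' n, (sin (c n * k) / k) ^ 2 * d n) (𝓝[≠] 0)
      (𝓝 (∑' n, c n ^ 2 * d n)) :=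
  tendsto_tsum_of_dominated_convergence h
    (fun n => ((tendsto_sin_mul_div (c n)).pow 2).mul_const (d n))
    (Eventually.of_forall fun k n => by
      rw [norm_mul, norm_pow, Real.norm_eq_abs, Real.norm_eq_abs, ← sq_abs (c n)]
      exact mul_le_mul_of_nonneg_right
        (pow_le_pow_left₀ (abs_nonneg _) (abs_sin_mul_div_le _ _) 2) (abs_nonneg _))

lemma tendsto_ahatD_div {θ : ℝ} (hθ : 3 < θ) :
    Tendsto (fun k => ahatD θ k / k) (𝓝[≠] 0) (𝓝 (2 * Cθ3 θ)) := by
  have hb (n : ℕ) : (0 : ℝ) < n + 1 := by positivity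
  have hcd (n : ℕ) : 2 * π * ((n : ℝ) + 1) * ((n : ℝ) + 1) ^ (1 - θ)
      = 2 * π * ((n : ℝ) + 1) ^ (2 - θ) := by
    rw [show 2 - θ = (1 - θ) + 1 by ring, Real.rpow_add_one (hb n).ne']
    ring
  have hsum : Summable fun n : ℕ => |2 * π * ((n : ℝ) + 1)| * |((n : ℝ) + 1) ^ (1 - θ)| :=
    ((summable_nat_add_one_rpow (show 2 - θ < -1 by linarith)).mul_left (2 * π)).congr
      fun n => by rw [← abs_mul, hcd, abs_of_nonneg (by positivity)]
  have key := (tendsto_tsum_sin_mul_div_mul hsum).const_mul (4 * π)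
  simp only [hcd, tsum_mul_left] at key
  rw [show 4 * π * (2 * π * ∑' n : ℕ, ((n : ℝ) + 1) ^ (2 - θ)) = 2 * Cθ3 θ by
    rw [Cθ3]; ring] at key
  refine key.congr fun k => ?_
  rw [ahatD, mul_div_assoc, ← tsum_div_const]
  congr 2 with n
  rw [show 1 - θ = -(θ - 1) by ring, Real.rpow_neg (hb n).le,
    show 2 * π * ((n : ℝ) + 1) * k = 2 * π * k * ((n : ℝ) + 1) by ring]
  ring

lemma tendsto_ahat_div_sq {θ : ℝ} (hθ : 3 < θ) :
    Tendsto (fun k => ahat θ k / k ^ 2) (𝓝[≠] 0) (𝓝 (Cθ3 θ)) := by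
  have hb (n : ℕ) : (0 : ℝ) < n + 1 := by positivity
  have hcd (n : ℕ) : (π * ((n : ℝ) + 1)) ^ 2 * ((n : ℝ) + 1) ^ (-θ)
      = π ^ 2 * ((n : ℝ) + 1) ^ (2 - θ) := by
    rw [show 2 - θ = -θ + (2 : ℕ) by push_cast; ring, Real.rpow_add_natCast (hb n).ne']
    ring
  have hsum : Summable fun n : ℕ => (π * ((n : ℝ) + 1)) ^ 2 * |((n : ℝ) + 1) ^ (-θ)| :=
    ((summable_nat_add_one_rpow (show 2 - θ < -1 by linarith)).mul_left (π ^ 2)).congr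
      fun n => by rw [abs_of_nonneg (by positivity), hcd]
  have key := (tendsto_tsum_sq_sin_mul_div_mul hsum).const_mul 4
  simp only [hcd, tsum_mul_left] at key
  rw [show 4 * (π ^ 2 * ∑' n : ℕ, ((n : ℝ) + 1) ^ (2 - θ)) = Cθ3 θ by
    rw [Cθ3]; ring] at key
  refine key.congr fun k => ?_
  rw [ahat, mul_div_assoc, ← tsum_div_const]
  congr 2 with n
  rw [Real.rpow_neg (hb n).le, show π * ((n : ℝ) + 1) * k = π * k * ((n : ℝ) + 1) by ring]
  ring

lemma Cθ3_pos {θ : ℝ} (hθ : 3 < θ) : 0 < Cθ3 θ := by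
  have hsum := summable_nat_add_one_rpow (show 2 - θ < -1 by linarith)
  exact mul_pos (by positivity) (hsum.tsum_pos (fun n => by positivity) 0 (by positivity))

theorem stmt10 (θ : ℝ) (hθ : 3 < θ) :
    (∀ k ∈ Set.Ioo (0 : ℝ) (1 / 2),
      HasDerivAt (disp θ) (ahatD θ k / (2 * Real.sqrt (ahat θ k))) k) ∧
    Filter.Tendsto (fun k : ℝ => deriv (disp θ) k)
      (nhdsWithin 0 (Set.Ioi 0)) (nhds (Real.sqrt (Cθ3 θ))) := by
  have hderiv (k : ℝ) (hk : k ∈ Set.Ioo (0 : ℝ) (1 / 2)) :=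
    hasDerivAt_disp (by linarith) hk.1 (by linarith [hk.2])
  refine ⟨hderiv, ?_⟩
  have hC := Cθ3_pos hθ
  have hlim := (tendsto_ahatD_div hθ).div ((tendsto_ahat_div_sq hθ).sqrt.const_mul 2)
    (by positivity)
  rw [mul_div_mul_left _ _ two_ne_zero, Real.div_sqrt] at hlim
  refine (hlim.mono_left (nhdsGT_le_nhdsNE 0)).congr' ?_
  filter_upwards [Ioo_mem_nhdsGT one_half_pos] with k hk
  rw [Pi.div_apply, (hderiv k hk).deriv, Real.sqrt_div (ahat_nonneg θ k), Real.sqrt_sq hk.1.le,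
    ← mul_div_assoc, div_div_div_cancel_right₀ hk.1.ne']
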